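/- Let a₀, a_d ∈ ℝ, 0 < d < T, let f : [0,T] → ℝ and g : [0,T] → ℝ be continuous. Suppose y solves y'(t) = −a₀ y(t) − a_d y(t−d) + f(t) on [0,T] with y(τ) = 0 for τ ∈ [−d, 0], and p solves the anticipated adjoint equation p'(t) = a₀ p(t) + a_d p(t+d) − g(t) on [0,T] with p(s) = 0 for s ∈ (T, T+d] and terminal value p(T) = p_T. Then p_T y(T) = ∫₀ᵀ ( p(s) f(s) − g(s) y(s) ) ds. -/

import Mathlib

open Set intervalIntegral MeasureTheory Filter Topology

/-!
Off the single point `t = T - d`, where `p (· + d)` may jump, the product `p * y` is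
differentiable with derivative `a_d (p (t + d) y t - p t y (t - d)) + p t f t - g t y t`:
the `a₀` terms cancel. Integrating over `[0, T]` gives `p_T * y T - p 0 * y 0 = p_T * y T`,
and the two delay terms have equal integrals after the shift `s ↦ s + d`, since `y` vanishes
on the history interval and `p` vanishes beyond `T`.
-/

theorem integral_comp_add_mul_eq_integral_mul_comp_sub {φ ψ : ℝ → ℝ} {d T : ℝ}
    (hd : 0 ≤ d) (hT : 0 ≤ T) (hφ : ∀ s ∈ Ioc T (T + d), φ s = 0)
    (hψ : ∀ s ∈ Ioc (-d) 0, ψ s = 0) :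
    ∫ s in (0:ℝ)..T, φ (s + d) * ψ s = ∫ s in (0:ℝ)..T, φ s * ψ (s - d) := by
  calc ∫ s in (0:ℝ)..T, φ (s + d) * ψ s
      = ∫ s in (0:ℝ)..T, φ (s + d) * ψ (s + d - d) := by simp only [add_sub_cancel_right]
    _ = ∫ u in d..T + d, φ u * ψ (u - d) := by
      rw [integral_comp_add_right (fun u => φ u * ψ (u - d)), zero_add]
    _ = ∫ u in Ioc d T, φ u * ψ (u - d) := by
      rw [integral_of_le (by linarith)]
      refine setIntegral_eq_of_subset_of_forall_sdiff_eq_zero measurableSet_Ioc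
        (Ioc_subset_Ioc_right (by linarith)) fun u hu => ?_
      simp only [Set.mem_sdiff, mem_Ioc, not_and, not_le] at hu
      rw [hφ u ⟨hu.2 hu.1.1, hu.1.2⟩, zero_mul]
    _ = ∫ u in (0:ℝ)..T, φ u * ψ (u - d) := by
      rw [integral_of_le hT]
      refine (setIntegral_eq_of_subset_of_forall_sdiff_eq_zero measurableSet_Ioc
        (Ioc_subset_Ioc_left hd) fun u hu => ?_).symm
      simp only [Set.mem_sdiff, mem_Ioc, not_and', not_lt] at hu
      rw [hψ (u - d) ⟨by linarith [hu.1.1], by linarith [hu.2 hu.1.2]⟩, mul_zero]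

section PiecewiseContinuous

variable {E : Type*} [NormedAddCommGroup E] {h : ℝ → E} {a b c : ℝ}

theorem intervalIntegrable_of_continuousOn_Icc_of_eq_zero_Ioc (hab : a ≤ b) (hbc : b ≤ c)
    (hc : ContinuousOn h (Icc a b)) (hz : ∀ x ∈ Ioc b c, h x = 0) :
    IntervalIntegrable h volume a c :=
  (hc.intervalIntegrable_of_Icc hab).trans <|
    (intervalIntegrable_const (c := (0 : E))).congr <| by
      rw [uIoc_of_le hbc]
      exact fun x hx => (hz x hx).symm

theorem continuousAt_of_continuousOn_Icc_of_eq_zero_Ioc {x : ℝ}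
    (hc : ContinuousOn h (Icc a b)) (hz : ∀ x ∈ Ioc b c, h x = 0) (hx : x ∈ Ioo a c)
    (hxb : x ≠ b) : ContinuousAt h x := by
  rcases hxb.lt_or_gt with hlt | hgt
  · exact hc.continuousAt (Icc_mem_nhds hx.1 hlt)
  · refine (continuousAt_const (y := (0 : E))).congr ?_
    filter_upwards [Ioo_mem_nhds hgt hx.2] with z hz'
    exact (hz z ⟨hz'.1, hz'.2.le⟩).symm

end PiecewiseContinuous

theorem ContinuousOn.comp_sub_Icc {X : Type*} [TopologicalSpace X] {y : ℝ → X} {a b d : ℝ}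
    (hy : ContinuousOn y (Icc a b)) : ContinuousOn (fun s => y (s - d)) (Icc (a + d) (b + d)) :=
  hy.comp (continuousOn_id.sub continuousOn_const) fun s hs =>
    ⟨by linarith [hs.1], by linarith [hs.2]⟩

theorem hasDerivAt_of_forall_eq_add_integral {E : Type*} [NormedAddCommGroup E]
    [NormedSpace ℝ E] [CompleteSpace E] {y G : ℝ → E} {a b x₀ t : ℝ} {c : E}
    (hy : ∀ x ∈ Icc a b, y x = c + ∫ s in x₀..x, G s) (hx₀ : x₀ ∈ Icc a b)
    (hG : IntervalIntegrable G volume a b) (ht : t ∈ Ioo a b) (hGt : ContinuousAt G t) :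
    HasDerivAt y (G t) t := by
  have hmeas : StronglyMeasurableAtFilter G (𝓝 t) :=
    AEStronglyMeasurable.stronglyMeasurableAtFilter_of_mem
      ((intervalIntegrable_iff_integrableOn_Ioo_of_le (ht.1.trans ht.2).le).1 hG).1
      (Ioo_mem_nhds ht.1 ht.2)
  have hG' : IntervalIntegrable G volume x₀ t :=
    hG.mono_set <|
      uIcc_subset_uIcc (Icc_subset_uIcc hx₀) (Icc_subset_uIcc (Ioo_subset_Icc_self ht))
  exact ((integral_hasDerivAt_right hG' hmeas hGt).const_add c).congr_of_eventuallyEq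
    (eventually_of_mem (Icc_mem_nhds ht.1 ht.2) hy)

theorem hasDerivAt_of_eq_integral_delay {a₀ a_d d T : ℝ} {f y : ℝ → ℝ} (hd : 0 ≤ d)
    (hf : ContinuousOn f (Icc 0 T)) (hyc : ContinuousOn y (Icc (-d) T))
    (hy : ∀ t ∈ Icc 0 T, y t = ∫ s in (0:ℝ)..t, (-a₀ * y s - a_d * y (s - d) + f s))
    {t : ℝ} (ht : t ∈ Ioo 0 T) : HasDerivAt y (-a₀ * y t - a_d * y (t - d) + f t) t := by
  have hyd : ContinuousOn (fun s => y (s - d)) (Icc 0 T) :=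
    hyc.comp_sub_Icc.mono (Icc_subset_Icc (by linarith) (by linarith))
  have hG : ContinuousOn (fun s => -a₀ * y s - a_d * y (s - d) + f s) (Icc 0 T) :=
    ((continuousOn_const.mul (hyc.mono (Icc_subset_Icc_left (by linarith)))).sub
      (continuousOn_const.mul hyd)).add hf
  have hT : 0 ≤ T := (ht.1.trans ht.2).le
  exact hasDerivAt_of_forall_eq_add_integral (c := 0)
    (fun x hx => by rw [zero_add]; exact hy x hx) (left_mem_Icc.2 hT)
    (hG.intervalIntegrable_of_Icc hT) ht (hG.continuousAt (Icc_mem_nhds ht.1 ht.2))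

theorem intervalIntegrable_comp_add_of_eq_zero_Ioc {d T : ℝ} {p : ℝ → ℝ} (hd : 0 ≤ d)
    (hdT : d ≤ T) (hpc : ContinuousOn p (Icc 0 T)) (hpterm : ∀ s ∈ Ioc T (T + d), p s = 0) :
    IntervalIntegrable (fun s => p (s + d)) volume 0 T := by
  simpa using (intervalIntegrable_of_continuousOn_Icc_of_eq_zero_Ioc hdT (by linarith)
    (hpc.mono (Icc_subset_Icc_left hd)) hpterm).comp_add_right d

theorem hasDerivAt_of_eq_integral_advance {a₀ a_d d T p_T : ℝ} {g p : ℝ → ℝ}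
    (hd : 0 ≤ d) (hdT : d ≤ T) (hg : ContinuousOn g (Icc 0 T)) (hpc : ContinuousOn p (Icc 0 T))
    (hpterm : ∀ s ∈ Ioc T (T + d), p s = 0)
    (hp : ∀ t ∈ Icc 0 T, p t = p_T + ∫ s in t..T, (-a₀ * p s - a_d * p (s + d) + g s))
    {t : ℝ} (ht : t ∈ Ioo 0 T) (htd : t + d ≠ T) :
    HasDerivAt p (a₀ * p t + a_d * p (t + d) - g t) t := by
  have hT : 0 ≤ T := hd.trans hdT
  have hF : IntervalIntegrable (fun s => -a₀ * p s - a_d * p (s + d) + g s) volume 0 T :=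
    (((hpc.intervalIntegrable_of_Icc hT).const_mul (-a₀)).sub
      ((intervalIntegrable_comp_add_of_eq_zero_Ioc hd hdT hpc hpterm).const_mul a_d)).add
      (hg.intervalIntegrable_of_Icc hT)
  have hnhds : Icc 0 T ∈ 𝓝 t := Icc_mem_nhds ht.1 ht.2
  have hpd : ContinuousAt (fun s => p (s + d)) t :=
    ContinuousAt.comp (f := fun s => s + d) (continuousAt_of_continuousOn_Icc_of_eq_zero_Ioc hpc
      hpterm ⟨by linarith [ht.1], by linarith [ht.2]⟩ htd) (continuous_add_const d).continuousAt
  have hFt : ContinuousAt (fun s => -a₀ * p s - a_d * p (s + d) + g s) t :=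
    ((continuousAt_const.mul (hpc.continuousAt hnhds)).sub (continuousAt_const.mul hpd)).add
      (hg.continuousAt hnhds)
  have hp' : ∀ x ∈ Icc 0 T,
      p x = p_T + ∫ s in T..x, -(-a₀ * p s - a_d * p (s + d) + g s) := fun x hx => by
    rw [intervalIntegral.integral_neg, ← integral_symm]
    exact hp x hx
  exact (hasDerivAt_of_forall_eq_add_integral hp' (right_mem_Icc.2 hT) hF.neg ht
    hFt.neg).congr_deriv (by ring)

/-- duality between the forward delay variational equation (zero
history) and the backward anticipated adjoint equation. -/
theorem stmt_10 (a₀ a_d d T p_T : ℝ) (hd : 0 < d) (hdT : d < T)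
    (f g : ℝ → ℝ) (hf : ContinuousOn f (Icc 0 T)) (hg : ContinuousOn g (Icc 0 T))
    (y : ℝ → ℝ) (hyc : ContinuousOn y (Icc (-d) T))
    (hyhist : ∀ τ ∈ Icc (-d) 0, y τ = 0)
    (hy : ∀ t ∈ Icc 0 T,
      y t = ∫ s in (0:ℝ)..t, (-a₀ * y s - a_d * y (s - d) + f s))
    (p : ℝ → ℝ) (hpc : ContinuousOn p (Icc 0 T))
    (hpterm : ∀ s ∈ Ioc T (T + d), p s = 0) (hpT : p T = p_T)
    (hp : ∀ t ∈ Icc 0 T,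
      p t = p_T + ∫ s in t..T, (-a₀ * p s - a_d * p (s + d) + g s)) :
    p_T * y T = ∫ s in (0:ℝ)..T, (p s * f s - g s * y s) := by
  have hT : 0 ≤ T := (hd.trans hdT).le
  have hyc' : ContinuousOn y (Icc 0 T) := hyc.mono (Icc_subset_Icc_left (by linarith))
  have hyd : ContinuousOn (fun s => y (s - d)) (Icc 0 T) :=
    hyc.comp_sub_Icc.mono (Icc_subset_Icc (by linarith) (by linarith))
  have hA : IntervalIntegrable (fun s => p (s + d) * y s) volume 0 T :=
    (intervalIntegrable_comp_add_of_eq_zero_Ioc hd.le hdT.le hpc hpterm).mul_continuousOn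
      (by rwa [uIcc_of_le hT])
  have hB : IntervalIntegrable (fun s => p s * y (s - d)) volume 0 T :=
    (hpc.mul hyd).intervalIntegrable_of_Icc hT
  have hC : IntervalIntegrable (fun s => p s * f s - g s * y s) volume 0 T :=
    ((hpc.mul hf).sub (hg.mul hyc')).intervalIntegrable_of_Icc hT
  have hderiv : ∀ t ∈ Ioo 0 T \ {T - d}, HasDerivAt (fun s => p s * y s)
      (a_d * (p (t + d) * y t - p t * y (t - d)) + (p t * f t - g t * y t)) t := by
    rintro t ⟨ht, hte⟩
    have htd : t + d ≠ T := fun h => hte (by rw [mem_singleton_iff]; linarith)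
    exact ((hasDerivAt_of_eq_integral_advance hd.le hdT.le hg hpc hpterm hp ht htd).mul
      (hasDerivAt_of_eq_integral_delay hd.le hf hyc hy ht)).congr_deriv (by ring)
  calc p_T * y T = p T * y T - p 0 * y 0 := by
        rw [hpT, hyhist 0 ⟨by linarith, le_rfl⟩, mul_zero, sub_zero]
    _ = ∫ s in (0:ℝ)..T,
          (a_d * (p (s + d) * y s - p s * y (s - d)) + (p s * f s - g s * y s)) :=
      (integral_eq_of_hasDerivAt_off_countable_of_le (fun s => p s * y s) _ hT
        (countable_singleton _) (hpc.mul hyc') hderiv (((hA.sub hB).const_mul a_d).add hC)).symm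
    _ = a_d * ((∫ s in (0:ℝ)..T, p (s + d) * y s) - ∫ s in (0:ℝ)..T, p s * y (s - d))
          + ∫ s in (0:ℝ)..T, (p s * f s - g s * y s) := by
      rw [intervalIntegral.integral_add ((hA.sub hB).const_mul a_d) hC,
        intervalIntegral.integral_const_mul, intervalIntegral.integral_sub hA hB]
    _ = ∫ s in (0:ℝ)..T, (p s * f s - g s * y s) := by
      rw [integral_comp_add_mul_eq_integral_mul_comp_sub hd.le hT hpterm
        (fun s hs => hyhist s (Ioc_subset_Icc_self hs)), sub_self, mul_zero, zero_add]
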